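/- arXiv:0812.3989 — 2 statements merged into one kernel-verified Lean document; each statement's English description precedes it below -/
import Mathlib

section
/- Assume moreover that ε₀ ∈ (0, 1/9) satisfies α̃(t) + φ̃(t) ≥ 28.5/27 for all t ∈ [(1 − 2ε₀)/3, 2/3]. Then there exists A₀ > 0, depending only on C₀, K and ε₀, such that for every A ≥ A₀ and every pair (μ, η) ∈ 𝓜 with (4 − ε₀)·A/3 ≤ ‖μ‖² ≤ 5A/3, one has 1 − φ(β) − α(‖μ‖²) ≤ −1/27. -/
open RealInnerProductSpace

set_option maxHeartbeats 1000000 in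
/-- If moreover `ε₀ ∈ (0, 1/9)` satisfies `α̃(t) + φ̃(t) ≥ 28.5/27` on `[(1 − 2ε₀)/3, 2/3]`,
then for `A` large and `(μ, η) ∈ 𝓜` with `(4 − ε₀)A/3 ≤ ‖μ‖² ≤ 5A/3`,
one has `1 − φ(β) − α(‖μ‖²) ≤ −1/27`. -/
theorem middle_region_estimate
    {E : Type*} [NormedAddCommGroup E] [InnerProductSpace ℝ E]
    (C₀ K : ℝ) (hC₀ : 0 < C₀) (hK : 0 < K)
    (αt φt : ℝ → ℝ)
    (hαsm : ContDiff ℝ (⊤ : ℕ∞) αt) (hφsm : ContDiff ℝ (⊤ : ℕ∞) φt)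
    (hα1 : ∀ t : ℝ, t ≤ 1/3 → αt t = t ^ 2)
    (hα2 : ∀ t : ℝ, 2/3 ≤ t → αt t = 1)
    (hα3 : ∀ t : ℝ, 0 ≤ αt t ∧ αt t ≤ 1)
    (hφ1 : ∀ t : ℝ, t ≤ 1/3 → φt t = 1 - t ^ 3)
    (hφ2 : ∀ t : ℝ, 2/3 ≤ t → φt t = 2 * (1 - t))
    (hmid : ∀ t ∈ Set.Icc (1/3 : ℝ) (2/3 : ℝ), 29/27 ≤ αt t + φt t ∧ deriv φt t < 0)
    (hKb : ∀ t ∈ Set.Icc (-1 : ℝ) (3 : ℝ),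
      |deriv αt t| ≤ K ∧ |deriv (deriv αt) t| ≤ K ∧
      |deriv φt t| ≤ K ∧ |deriv (deriv φt) t| ≤ K)
    (ε₀ : ℝ) (hε₀ : 0 < ε₀) (hε₀' : ε₀ < 1/9)
    (hmid' : ∀ t ∈ Set.Icc ((1 - 2 * ε₀)/3 : ℝ) (2/3 : ℝ), 28.5/27 ≤ αt t + φt t) :
    ∃ A₀ > 0, ∀ A : ℝ, A₀ ≤ A → ∀ μ η : E, ‖η‖ ≤ C₀ →
      A ≤ ‖μ‖ ^ 2 → ‖μ + η‖ ^ 2 ≤ 2 * A →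
      (4 - ε₀) * A / 3 ≤ ‖μ‖ ^ 2 → ‖μ‖ ^ 2 ≤ 5 * A / 3 →
      let α : ℝ → ℝ := fun t => αt (t / A - 1)
      let φ : ℝ → ℝ := fun t => φt (t / A - 1)
      let β : ℝ := ‖μ‖ ^ 2 + α (‖μ‖ ^ 2) * (‖μ + η‖ ^ 2 - ‖μ‖ ^ 2)
      1 - φ β - α (‖μ‖ ^ 2) ≤ -(1/27) := by
  have hs2 : (0:ℝ) ≤ Real.sqrt 2 := Real.sqrt_nonneg 2
  set M : ℝ := 108 * K * (2 * Real.sqrt 2 * C₀ + C₀ ^ 2) + 1 with hMdef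
  have hM0 : (0:ℝ) ≤ 108 * K * (2 * Real.sqrt 2 * C₀ + C₀ ^ 2) := by positivity
  have hM1 : 1 ≤ M := by rw [hMdef]; linarith
  refine ⟨max (M ^ 2) 1, by positivity, ?_⟩
  intro A hA μ η hη hAμ hθ2A hlow hhigh
  intro α φ β
  show 1 - φt ((‖μ‖ ^ 2 + αt (‖μ‖ ^ 2 / A - 1) * (‖μ + η‖ ^ 2 - ‖μ‖ ^ 2)) / A - 1)
      - αt (‖μ‖ ^ 2 / A - 1) ≤ -(1/27)
  clear_value α φ β
  clear α φ β
  have hA1 : (1:ℝ) ≤ A := le_trans (le_max_right _ _) hA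
  have hApos : (0:ℝ) < A := by linarith
  have hAM : M ^ 2 ≤ A := le_trans (le_max_left _ _) hA
  have hsA : Real.sqrt A * Real.sqrt A = A := Real.mul_self_sqrt hApos.le
  have hsqA1 : 1 ≤ Real.sqrt A := by
    rw [show (1:ℝ) = Real.sqrt 1 by simp]
    exact Real.sqrt_le_sqrt hA1
  have hMA : M ≤ Real.sqrt A := by
    calc M = Real.sqrt (M ^ 2) := (Real.sqrt_sq (by linarith)).symm
      _ ≤ Real.sqrt A := Real.sqrt_le_sqrt hAM
  obtain ⟨s, hsdef⟩ : ∃ x : ℝ, x = ‖μ‖ ^ 2 / A - 1 := ⟨_, rfl⟩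
  rw [← hsdef]
  obtain ⟨a, hadef⟩ : ∃ x : ℝ, x = αt s := ⟨_, rfl⟩
  rw [← hadef]
  obtain ⟨d, hddef⟩ : ∃ x : ℝ, x = ‖μ + η‖ ^ 2 - ‖μ‖ ^ 2 := ⟨_, rfl⟩
  rw [← hddef]
  obtain ⟨b, hbdef⟩ : ∃ x : ℝ, x = (‖μ‖ ^ 2 + a * d) / A - 1 := ⟨_, rfl⟩
  rw [← hbdef]
  have ha01 : 0 ≤ a ∧ a ≤ 1 := hadef ▸ hα3 s
  -- bounds on s
  have hdivlo : (4 - ε₀) / 3 ≤ ‖μ‖ ^ 2 / A := by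
    rw [le_div_iff₀ hApos]; linarith
  have hdivhi : ‖μ‖ ^ 2 / A ≤ 5 / 3 := by
    rw [div_le_iff₀ hApos]; linarith
  have hslo : (1 - 2 * ε₀) / 3 ≤ s := by rw [hsdef]; linarith
  have hshi : s ≤ 2 / 3 := by rw [hsdef]; linarith
  -- bounds on b
  have hnum0 : 0 ≤ ‖μ‖ ^ 2 + a * d := by
    rw [hddef]
    nlinarith [mul_nonneg ha01.1 (sq_nonneg ‖μ + η‖), sq_nonneg ‖μ‖, sq_nonneg ‖μ + η‖]
  have hnum2 : ‖μ‖ ^ 2 + a * d ≤ 2 * A := by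
    rw [hddef]
    nlinarith [mul_nonneg ha01.1 (by linarith : (0:ℝ) ≤ 2 * A - ‖μ + η‖ ^ 2),
      mul_nonneg (by linarith : (0:ℝ) ≤ 1 - a) (by linarith : (0:ℝ) ≤ 2 * A - ‖μ‖ ^ 2)]
  have hblo : (-1 : ℝ) ≤ b := by
    rw [hbdef, le_sub_iff_add_le]
    have : (0:ℝ) ≤ (‖μ‖ ^ 2 + a * d) / A := div_nonneg hnum0 hApos.le
    linarith
  have hbhi : b ≤ 1 := by
    rw [hbdef, sub_le_iff_le_add, div_le_iff₀ hApos]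
    linarith
  -- |d| bound
  have hθ' : ‖μ + η‖ ^ 2 = ‖μ‖ ^ 2 + 2 * ⟪μ, η⟫ + ‖η‖ ^ 2 := norm_add_sq_real μ η
  have hinner : |⟪μ, η⟫| ≤ ‖μ‖ * ‖η‖ := abs_real_inner_le_norm μ η
  have hd : |d| ≤ 2 * ‖μ‖ * C₀ + C₀ ^ 2 := by
    have hi := abs_le.mp hinner
    rw [hddef, abs_le]
    constructor <;> nlinarith [norm_nonneg μ, norm_nonneg η]
  -- ‖μ‖ bound
  have hμ : ‖μ‖ ≤ Real.sqrt 2 * Real.sqrt A := by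
    rw [← Real.sqrt_mul (by norm_num : (0:ℝ) ≤ 2) A, ← Real.sqrt_sq (norm_nonneg μ)]
    exact Real.sqrt_le_sqrt (by linarith)
  -- |b - s| bound
  have hbs : b - s = a * d / A := by
    rw [hbdef, hsdef]
    field_simp
    ring
  have hbsabs : |b - s| ≤ (2 * ‖μ‖ * C₀ + C₀ ^ 2) / A := by
    rw [hbs, abs_div, abs_of_pos hApos, abs_mul]
    have haabs : |a| ≤ 1 := by rw [abs_le]; exact ⟨by linarith [ha01.1], ha01.2⟩
    have h1 : |a| * |d| ≤ 2 * ‖μ‖ * C₀ + C₀ ^ 2 := by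
      calc |a| * |d| ≤ 1 * (2 * ‖μ‖ * C₀ + C₀ ^ 2) :=
            mul_le_mul haabs hd (abs_nonneg _) zero_le_one
        _ = 2 * ‖μ‖ * C₀ + C₀ ^ 2 := one_mul _
    exact (div_le_div_iff_of_pos_right hApos).mpr h1
  -- Lipschitz bound for φt on [-1,3]
  have hlip : |φt b - φt s| ≤ K * |b - s| := by
    have hmem_s : s ∈ Set.Icc (-1:ℝ) 3 := ⟨by nlinarith, by linarith⟩
    have hmem_b : b ∈ Set.Icc (-1:ℝ) 3 := ⟨hblo, by linarith⟩
    have := (convex_Icc (-1:ℝ) 3).norm_image_sub_le_of_norm_deriv_le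
      (fun x _ => hφsm.differentiable (by simp) x)
      (fun x hx => by simpa [Real.norm_eq_abs] using (hKb x hx).2.2.1) hmem_s hmem_b
    simpa [Real.norm_eq_abs] using this
  -- K |b - s| ≤ 1/54
  have hsmall : K * |b - s| ≤ 1 / 54 := by
    have h1 : K * |b - s| ≤ K * ((2 * ‖μ‖ * C₀ + C₀ ^ 2) / A) :=
      mul_le_mul_of_nonneg_left hbsabs hK.le
    have h2 : 54 * (K * (2 * ‖μ‖ * C₀ + C₀ ^ 2)) ≤ A := by
      have e1 : K * (2 * ‖μ‖ * C₀ + C₀ ^ 2)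
          ≤ K * (2 * Real.sqrt 2 * C₀ + C₀ ^ 2) * Real.sqrt A := by
        nlinarith [mul_nonneg (mul_nonneg hK.le hC₀.le) (sub_nonneg.mpr hμ),
          mul_nonneg (mul_nonneg hK.le (sq_nonneg C₀)) (by linarith : (0:ℝ) ≤ Real.sqrt A - 1)]
      nlinarith [Real.sqrt_nonneg A]
    calc K * |b - s| ≤ K * ((2 * ‖μ‖ * C₀ + C₀ ^ 2) / A) := h1
      _ = K * (2 * ‖μ‖ * C₀ + C₀ ^ 2) / A := by ring
      _ ≤ 1 / 54 := by
          rw [div_le_div_iff₀ hApos (by norm_num)]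
          linarith
  have hφb : φt s - 1 / 54 ≤ φt b := by
    have := abs_le.mp hlip
    linarith
  have hmid'' := hmid' s ⟨hslo, hshi⟩
  have h285 : (28.5:ℝ)/27 = 28/27 + 1/54 := by norm_num
  linarith
end

section
/- Let (X, ν) be a measure space, V a complex Hilbert space, and H = L²(X, ν; V). Let n be a positive integer, let f₁, …, fₙ : X → ℝ be measurable, set ℋ(x) = Σᵢ fᵢ(x)², and let A₁, …, Aₙ : H → H be bounded linear operators with operator norms ‖Aᵢ‖. Let s ∈ H be such that ∫_X ℋ(x)·‖s(x)‖² dν(x) < ∞ and such that ℋ(x) ≥ Σᵢ ‖Aᵢ‖² for ν-almost every x with s(x) ≠ 0. Then |Σᵢ ∫_X fᵢ(x)·⟨(Aᵢ s)(x), s(x)⟩ dν(x)| ≤ ∫_X ℋ(x)·‖s(x)‖² dν(x). -/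
open MeasureTheory

/-- If `s ∈ L²(X, ν; V)` satisfies `∫ ℋ‖s‖² < ∞` and `ℋ(x) ≥ Σᵢ‖Aᵢ‖²` a.e. on the
support of `s`, where `ℋ = Σᵢ fᵢ²`, then
`|Σᵢ ∫ fᵢ(x)⟨(Aᵢs)(x), s(x)⟩ dν| ≤ ∫ ℋ(x)‖s(x)‖² dν`. -/
theorem moment_map_operator_estimate
    {X : Type*} [MeasurableSpace X] (ν : Measure X)
    {V : Type*} [NormedAddCommGroup V] [InnerProductSpace ℂ V] [CompleteSpace V]
    (n : ℕ) (hn : 0 < n)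
    (f : Fin n → X → ℝ) (hf : ∀ i, Measurable (f i))
    (A : Fin n → (Lp V 2 ν →L[ℂ] Lp V 2 ν))
    (s : Lp V 2 ν)
    (hint : Integrable (fun x => (∑ i, f i x ^ 2) * ‖s x‖ ^ 2) ν)
    (hsupp : ∀ᵐ x ∂ν, s x ≠ 0 → (∑ i, ‖A i‖ ^ 2) ≤ ∑ i, f i x ^ 2) :
    ‖(∑ i, ∫ x, (f i x : ℂ) * (inner ℂ ((A i s) x) (s x) : ℂ) ∂ν)‖
      ≤ ∫ x, (∑ i, f i x ^ 2) * ‖s x‖ ^ 2 ∂ν := by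
  -- basic integrability facts
  have hs2 : Integrable (fun x => ‖s x‖ ^ 2) ν := (Lp.memLp s).norm.integrable_sq
  have hAs2 : ∀ i, Integrable (fun x => ‖(A i s) x‖ ^ 2) ν := fun i =>
    (Lp.memLp (A i s)).norm.integrable_sq
  have hfs2 : ∀ i, Integrable (fun x => f i x ^ 2 * ‖s x‖ ^ 2) ν := by
    intro i
    refine hint.mono' ?_ ?_
    · exact (((hf i).pow_const 2).aestronglyMeasurable.mul
        ((Lp.aestronglyMeasurable s).norm.pow 2))
    · filter_upwards with x
      rw [Real.norm_eq_abs, abs_of_nonneg (by positivity)]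
      exact mul_le_mul_of_nonneg_right
        (Finset.single_le_sum (fun j _ => sq_nonneg (f j x)) (Finset.mem_univ i))
        (sq_nonneg _)
  -- pointwise bound
  have hbound : ∀ i, ∀ x, ‖(f i x : ℂ) * (inner ℂ ((A i s) x) (s x) : ℂ)‖
      ≤ (f i x ^ 2 * ‖s x‖ ^ 2 + ‖(A i s) x‖ ^ 2) / 2 := by
    intro i x
    rw [norm_mul, Complex.norm_real, Real.norm_eq_abs]
    calc |f i x| * ‖(inner ℂ ((A i s) x) (s x) : ℂ)‖
        ≤ |f i x| * (‖(A i s) x‖ * ‖s x‖) :=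
          mul_le_mul_of_nonneg_left (norm_inner_le_norm _ _) (abs_nonneg _)
      _ ≤ (f i x ^ 2 * ‖s x‖ ^ 2 + ‖(A i s) x‖ ^ 2) / 2 := by
          nlinarith [sq_nonneg (|f i x| * ‖s x‖ - ‖(A i s) x‖), sq_abs (f i x),
            abs_nonneg (f i x), norm_nonneg (s x), norm_nonneg ((A i s) x)]
  have hintg : ∀ i, Integrable (fun x => (f i x : ℂ) * (inner ℂ ((A i s) x) (s x) : ℂ)) ν := by
    intro i
    refine (((hfs2 i).add (hAs2 i)).div_const 2).mono' ?_ (Filter.Eventually.of_forall (hbound i))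
    exact (Complex.measurable_ofReal.comp (hf i)).aestronglyMeasurable.mul
      ((Lp.aestronglyMeasurable (A i s)).inner (Lp.aestronglyMeasurable s))
  -- ∫ ‖g x‖² = ‖g‖² for g ∈ L²
  have hnormsq : ∀ g : Lp V 2 ν, ∫ x, ‖g x‖ ^ 2 ∂ν = ‖g‖ ^ 2 := by
    intro g
    rw [← inner_self_eq_norm_sq (𝕜 := ℂ) g, L2.inner_def,
      ← integral_re (L2.integrable_inner g g)]
    exact integral_congr_ae (Filter.Eventually.of_forall fun x =>
      (inner_self_eq_norm_sq (𝕜 := ℂ) (g x)).symm)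
  have hA_le : ∀ i, ∫ x, ‖(A i s) x‖ ^ 2 ∂ν ≤ ‖A i‖ ^ 2 * ‖s‖ ^ 2 := by
    intro i
    rw [hnormsq, ← mul_pow]
    exact pow_le_pow_left₀ (norm_nonneg _) ((A i).le_opNorm s) 2
  have hc : (∑ i, ‖A i‖ ^ 2) * ‖s‖ ^ 2 ≤ ∫ x, (∑ i, f i x ^ 2) * ‖s x‖ ^ 2 ∂ν := by
    rw [← hnormsq s, ← integral_const_mul]
    refine integral_mono_ae (hs2.const_mul _) hint ?_
    filter_upwards [hsupp] with x hx
    by_cases h : s x = 0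
    · simp only [h, norm_zero, ne_eq, OfNat.ofNat_ne_zero, not_false_eq_true, zero_pow,
        mul_zero, le_refl]
    · exact mul_le_mul_of_nonneg_right (hx h) (sq_nonneg _)
  have hI : ∑ i, ∫ x, f i x ^ 2 * ‖s x‖ ^ 2 ∂ν = ∫ x, (∑ i, f i x ^ 2) * ‖s x‖ ^ 2 ∂ν := by
    rw [← integral_finset_sum _ fun i _ => hfs2 i]
    exact integral_congr_ae (Filter.Eventually.of_forall fun x => (Finset.sum_mul _ _ _).symm)
  have hB : ∑ i, ∫ x, ‖(A i s) x‖ ^ 2 ∂ν ≤ ∫ x, (∑ i, f i x ^ 2) * ‖s x‖ ^ 2 ∂ν := by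
    calc ∑ i, ∫ x, ‖(A i s) x‖ ^ 2 ∂ν ≤ ∑ i, ‖A i‖ ^ 2 * ‖s‖ ^ 2 :=
          Finset.sum_le_sum fun i _ => hA_le i
      _ = (∑ i, ‖A i‖ ^ 2) * ‖s‖ ^ 2 := (Finset.sum_mul _ _ _).symm
      _ ≤ _ := hc
  calc ‖(∑ i, ∫ x, (f i x : ℂ) * (inner ℂ ((A i s) x) (s x) : ℂ) ∂ν)‖
      ≤ ∑ i, ‖(∫ x, (f i x : ℂ) * (inner ℂ ((A i s) x) (s x) : ℂ) ∂ν)‖ :=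
        norm_sum_le _ _
    _ ≤ ∑ i, ∫ x, ‖(f i x : ℂ) * (inner ℂ ((A i s) x) (s x) : ℂ)‖ ∂ν := by
        refine Finset.sum_le_sum fun i _ => ?_
        exact norm_integral_le_integral_norm _
    _ ≤ ∑ i, ∫ x, (f i x ^ 2 * ‖s x‖ ^ 2 + ‖(A i s) x‖ ^ 2) / 2 ∂ν :=
        Finset.sum_le_sum fun i _ => integral_mono (hintg i).norm
          (((hfs2 i).add (hAs2 i)).div_const 2) (hbound i)
    _ = ((∑ i, ∫ x, f i x ^ 2 * ‖s x‖ ^ 2 ∂ν) + ∑ i, ∫ x, ‖(A i s) x‖ ^ 2 ∂ν) / 2 := by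
        rw [Finset.sum_congr rfl fun i _ => by
          rw [integral_div, integral_add (hfs2 i) (hAs2 i)]]
        rw [← Finset.sum_div, Finset.sum_add_distrib]
    _ ≤ ∫ x, (∑ i, f i x ^ 2) * ‖s x‖ ^ 2 ∂ν := by
        rw [hI]
        linarith [hB]
end
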